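/- arXiv:2310.07243 — 6 statements merged into one kernel-verified Lean document; each statement's English description precedes it below -/
import Mathlib

section
/- If s' is a RAP-feasible assignment, then the collapsed assignment s defined by s k j := Σ_{ℓ ∈ Fin (L j)} s' k ⟨j, ℓ⟩ is a GAP-feasible assignment, and its GAP objective value Σ_{k,j} b k j · s k j equals the RAP objective value Σ_{k,i} b' k i · s' k i of s'. -/
/-!
A slot `⟨j, ℓ⟩` belongs to exactly one tier `j`, so collapsing a slot assignment tier by tier
only regroups the sums over `Σ j, Fin (L j)`: per-object totals and the objective value are
unchanged, and tier `j` receives at most one object per slot, hence at most `L j` objects.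
Integrality survives because an object that occupies at most one slot in total occupies at most
one slot of each tier, and a sum of `0`s and `1`s that is at most `1` is `0` or `1`.
-/

open Finset

theorem Finset.sum_eq_zero_or_one_of_le_one {ι R : Type*} [Semiring R] [PartialOrder R]
    [IsOrderedRing R] {s : Finset ι} {f : ι → R} (h01 : ∀ i ∈ s, f i = 0 ∨ f i = 1)
    (hle : ∑ i ∈ s, f i ≤ 1) : ∑ i ∈ s, f i = 0 ∨ ∑ i ∈ s, f i = 1 := by
  by_cases hzero : ∀ i ∈ s, f i = 0
  · exact Or.inl (sum_eq_zero hzero)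
  push Not at hzero
  obtain ⟨i, hi, hfi⟩ := hzero
  have hnonneg : ∀ i ∈ s, 0 ≤ f i := fun i hi => by rcases h01 i hi with h | h <;> simp [h]
  have hge : 1 ≤ ∑ i ∈ s, f i := by
    rw [← (h01 i hi).resolve_left hfi]
    exact single_le_sum hnonneg hi
  exact Or.inr (le_antisymm hle hge)

section TierSum

variable {J R : Type*} {σ : J → Type*} [∀ j, Fintype (σ j)]

def tierSum [AddCommMonoid R] (t : (Σ j, σ j) → R) (j : J) : R :=
  ∑ ℓ, t ⟨j, ℓ⟩

theorem sum_tierSum [Fintype J] [AddCommMonoid R] (t : (Σ j, σ j) → R) :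
    ∑ j, tierSum t j = ∑ i, t i :=
  (Fintype.sum_sigma t).symm

theorem sum_mul_tierSum [Fintype J] [NonUnitalNonAssocSemiring R] (b : J → R)
    (t : (Σ j, σ j) → R) : ∑ j, b j * tierSum t j = ∑ i, b i.1 * t i := by
  simp only [tierSum, mul_sum]
  exact (Fintype.sum_sigma fun i => b i.1 * t i).symm

theorem tierSum_le_sum [Fintype J] [AddCommMonoid R] [PartialOrder R] [IsOrderedAddMonoid R]
    {t : (Σ j, σ j) → R} (ht : ∀ i, 0 ≤ t i) (j : J) : tierSum t j ≤ ∑ i, t i := by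
  rw [← sum_tierSum]
  exact single_le_sum (f := tierSum t) (fun j _ => sum_nonneg fun ℓ _ => ht ⟨j, ℓ⟩) (mem_univ j)

theorem tierSum_eq_zero_or_one [Fintype J] [Semiring R] [PartialOrder R] [IsOrderedRing R]
    {t : (Σ j, σ j) → R} (h01 : ∀ i, t i = 0 ∨ t i = 1) (hle : ∑ i, t i ≤ 1) (j : J) :
    tierSum t j = 0 ∨ tierSum t j = 1 := by
  have hnonneg : ∀ i, 0 ≤ t i := fun i => by rcases h01 i with h | h <;> simp [h]
  exact sum_eq_zero_or_one_of_le_one (fun ℓ _ => h01 ⟨j, ℓ⟩)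
    ((tierSum_le_sum hnonneg j).trans hle)

theorem sum_tierSum_le_card {K : Type*} [Fintype K] [Semiring R] [PartialOrder R]
    [IsOrderedRing R] {s' : K → (Σ j, σ j) → R} (hslot : ∀ i, ∑ k, s' k i ≤ 1) (j : J) :
    ∑ k, tierSum (s' k) j ≤ Fintype.card (σ j) := by
  calc ∑ k, tierSum (s' k) j = ∑ ℓ, ∑ k, s' k ⟨j, ℓ⟩ := sum_comm
    _ ≤ Fintype.card (σ j) • (1 : R) := sum_le_card_nsmul _ _ _ fun ℓ _ => hslot ⟨j, ℓ⟩
    _ = Fintype.card (σ j) := nsmul_one _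

end TierSum

/-- Collapsing a RAP-feasible assignment tier-by-tier yields a GAP-feasible
assignment with the same objective value. -/
theorem rap_to_gap_feasible {K J : Type*} [Fintype K] [Fintype J]
    (L : J → ℕ) (b : K → J → ℝ)
    (s' : K → ((j : J) × Fin (L j)) → ℝ)
    (h01 : ∀ k i, s' k i = 0 ∨ s' k i = 1)
    (hslot : ∀ i, ∑ k, s' k i ≤ 1)
    (hobj : ∀ k, ∑ i, s' k i ≤ 1) :
    (∀ k j, (∑ ℓ : Fin (L j), s' k ⟨j, ℓ⟩) = 0 ∨ (∑ ℓ : Fin (L j), s' k ⟨j, ℓ⟩) = 1) ∧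
    (∀ j, ∑ k, ∑ ℓ : Fin (L j), s' k ⟨j, ℓ⟩ ≤ (L j : ℝ)) ∧
    (∀ k, ∑ j, ∑ ℓ : Fin (L j), s' k ⟨j, ℓ⟩ ≤ 1) ∧
    (∑ k, ∑ j, b k j * ∑ ℓ : Fin (L j), s' k ⟨j, ℓ⟩
      = ∑ k, ∑ i : (j : J) × Fin (L j), b k i.1 * s' k i) := by
  refine ⟨fun k => tierSum_eq_zero_or_one (h01 k) (hobj k), fun j => ?_,
    fun k => (sum_tierSum (s' k)).trans_le (hobj k),
    sum_congr rfl fun k _ => sum_mul_tierSum (b k) (s' k)⟩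
  simpa [tierSum] using sum_tierSum_le_card hslot j
end

section
/- If s is a GAP-feasible assignment, then there exists a RAP-feasible assignment s' such that for every object k and tier j, s k j = Σ_{ℓ ∈ Fin (L j)} s' k ⟨j, ℓ⟩, and the RAP objective value Σ_{k,i} b' k i · s' k i of s' equals the GAP objective value Σ_{k,j} b k j · s k j of s. -/
/-!
The objects that `s` puts into tier `j` number at most `L j`, so they can be placed injectively
into the `L j` slots of `j`. Summing the slot indicators over the slots of a tier gives back `s`,
so exclusivity and the objective carry over.
-/

open Finset

theorem Finset.exists_slot_assignment {K R : Type*} [Fintype K] [DecidableEq K] [Semiring R]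
    [PartialOrder R] [IsOrderedRing R] (S : Finset K) {n : ℕ} (hS : #S ≤ n) :
    ∃ x : K → Fin n → R,
      (∀ k ℓ, x k ℓ = 0 ∨ x k ℓ = 1) ∧
      (∀ ℓ, ∑ k, x k ℓ ≤ 1) ∧
      (∀ k, ∑ ℓ, x k ℓ = if k ∈ S then 1 else 0) := by
  classical
  obtain ⟨e⟩ : Nonempty (S ↪ Fin n) :=
    Function.Embedding.nonempty_of_card_le (by simpa using hS)
  refine ⟨fun k ℓ => if ∃ h : k ∈ S, e ⟨k, h⟩ = ℓ then 1 else 0, fun k ℓ => ?_, fun ℓ => ?_,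
    fun k => ?_⟩
  · dsimp only; split_ifs <;> simp
  · rw [sum_boole]
    refine (Nat.mono_cast (card_le_one.mpr ?_)).trans_eq Nat.cast_one
    intro a ha b hb
    obtain ⟨-, ha, rfl⟩ := mem_filter.mp ha
    obtain ⟨-, hb, hab⟩ := mem_filter.mp hb
    exact congrArg Subtype.val (e.injective hab.symm)
  · by_cases hk : k ∈ S <;> simp [hk]

theorem Fintype.sum_eq_card_filter_eq_one {K R : Type*} [Fintype K] [AddCommMonoidWithOne R]
    [DecidableEq R] (f : K → R) (hf : ∀ k, f k = 0 ∨ f k = 1) : ∑ k, f k = #{k | f k = 1} := by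
  rw [← sum_boole]
  refine Fintype.sum_congr _ _ fun k => ?_
  rcases hf k with h | h <;> simp [h]

/-- Every GAP-feasible assignment lifts to a RAP-feasible assignment over the
slot-expanded index set with the same objective value. -/
theorem gap_to_rap_feasible {K J : Type*} [Fintype K] [Fintype J]
    (L : J → ℕ) (b : K → J → ℝ)
    (s : K → J → ℝ)
    (h01 : ∀ k j, s k j = 0 ∨ s k j = 1)
    (hcap : ∀ j, ∑ k, s k j ≤ (L j : ℝ))
    (hexcl : ∀ k, ∑ j, s k j ≤ 1) :
    ∃ s' : K → ((j : J) × Fin (L j)) → ℝ,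
      (∀ k i, s' k i = 0 ∨ s' k i = 1) ∧
      (∀ i, ∑ k, s' k i ≤ 1) ∧
      (∀ k, ∑ i, s' k i ≤ 1) ∧
      (∀ k j, s k j = ∑ ℓ : Fin (L j), s' k ⟨j, ℓ⟩) ∧
      (∑ k, ∑ i : (j : J) × Fin (L j), b k i.1 * s' k i
        = ∑ k, ∑ j, b k j * s k j) := by
  classical
  have hcard (j : J) : #{k | s k j = 1} ≤ L j := by
    exact_mod_cast (Fintype.sum_eq_card_filter_eq_one _ (h01 · j)).symm.trans_le (hcap j)
  choose x hx01 hslot hrow using fun j => exists_slot_assignment (R := ℝ) _ (hcard j)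
  have hs (k : K) (j : J) : s k j = ∑ ℓ, x j k ℓ := by
    rw [hrow]
    rcases h01 k j with h | h <;> simp [h]
  refine ⟨fun k i => x i.1 k i.2, fun k i => hx01 _ _ _, fun i => hslot _ _, fun k => ?_, hs, ?_⟩
  · simpa only [Fintype.sum_sigma, ← hs] using hexcl k
  · simp only [Fintype.sum_sigma, ← mul_sum, ← hs]
end

section
/- Let E be a finite index set of object–tier pairs with data r, V, c_a, c_e : E → ℝ, a fixed previous state s_prev : E → {0,1}, and ω ∈ ℝ. For e ∈ E define b e := r e · V e − ω · c_a e if s_prev e = 0 and b e := r e · V e + ω · c_e e if s_prev e = 1, and for a new state s : E → {0,1} define the total penalty P(s) := Σ_{e∈E} p e, where p e := c_a e if s e = 1 and s_prev e = 0, p e := c_e e if s e = 0 and s_prev e = 1, and p e := 0 otherwise. Then for any two states s₁, s₂ : E → {0,1}: Σ_e b e · s₁ e − Σ_e b e · s₂ e = (Σ_e r e · V e · s₁ e − ω·P(s₁)) − (Σ_e r e · V e · s₂ e − ω·P(s₂)). Consequently, over any family of feasible states, s maximizes Σ_e b e · s e if and only if s maximizes Σ_e r e · V e · s e − ω·P(s).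 -/
/-!
For 0/1 states, `b e * s e` exceeds `r e * V e * s e - ω * p e` by `ω * ce e` when
`sprev e = 1` and by `0` otherwise. This offset does not depend on the new state `s`, so the
benefit and the drift-minus-penalty objective differ by a constant on all 0/1 states.
-/

open Finset

noncomputable def switchPenalty (ca ce s sprev : ℝ) : ℝ :=
  if s = 1 ∧ sprev = 0 then ca else if s = 0 ∧ sprev = 1 then ce else 0

theorem forall_le_iff_of_eq_add_const {α β : Type*} [Add β] [LE β] [AddRightMono β]
    [AddRightReflectLE β] {F : Set α} {f g : α → β} (c : β) (hfg : ∀ x ∈ F, f x = g x + c)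
    {a : α} (ha : a ∈ F) : (∀ x ∈ F, f x ≤ f a) ↔ (∀ x ∈ F, g x ≤ g a) := by
  refine forall₂_congr fun x hx => ?_
  rw [hfg x hx, hfg a ha, add_le_add_iff_right]

theorem benefit_mul_eq (x ω ca ce s sprev : ℝ) (hs : s = 0 ∨ s = 1)
    (hsprev : sprev = 0 ∨ sprev = 1) :
    (if sprev = 1 then x + ω * ce else x - ω * ca) * s
      = x * s - ω * switchPenalty ca ce s sprev + (if sprev = 1 then ω * ce else 0) := by
  rcases hs with rfl | rfl <;> rcases hsprev with rfl | rfl <;> norm_num [switchPenalty]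

theorem sum_benefit_mul_eq {E : Type*} [Fintype E] (r V ca ce sprev : E → ℝ)
    (hsprev : ∀ e, sprev e = 0 ∨ sprev e = 1) (ω : ℝ) (b : E → ℝ)
    (hb : ∀ e, b e = if sprev e = 1 then r e * V e + ω * ce e else r e * V e - ω * ca e)
    (s : E → ℝ) (hs : ∀ e, s e = 0 ∨ s e = 1) :
    ∑ e, b e * s e
      = (∑ e, r e * V e * s e - ω * ∑ e, switchPenalty (ca e) (ce e) (s e) (sprev e))
        + ∑ e, (if sprev e = 1 then ω * ce e else 0) := by
  rw [mul_sum, ← sum_sub_distrib, ← sum_add_distrib]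
  exact sum_congr rfl fun e _ => hb e ▸ benefit_mul_eq _ _ _ _ _ _ (hs e) (hsprev e)

/-- Across any two cache states, the difference of total benefits equals the
difference of drift-minus-penalty objectives; hence maximizing total benefit is
equivalent to maximizing the drift-minus-penalty objective over any family of
feasible states. -/
theorem benefit_maximization_equiv_drift_plus_penalty
    {E : Type*} [Fintype E]
    (r V ca ce sprev : E → ℝ)
    (hsprev : ∀ e, sprev e = 0 ∨ sprev e = 1)
    (ω : ℝ) (b : E → ℝ)
    (hb : ∀ e, b e = if sprev e = 1 then r e * V e + ω * ce e
                     else r e * V e - ω * ca e)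
    (P : (E → ℝ) → ℝ)
    (hP : ∀ s : E → ℝ, P s = ∑ e, (if s e = 1 ∧ sprev e = 0 then ca e
                                   else if s e = 0 ∧ sprev e = 1 then ce e
                                   else 0)) :
    (∀ s₁ s₂ : E → ℝ,
        (∀ e, s₁ e = 0 ∨ s₁ e = 1) → (∀ e, s₂ e = 0 ∨ s₂ e = 1) →
        (∑ e, b e * s₁ e) - (∑ e, b e * s₂ e)
          = ((∑ e, r e * V e * s₁ e) - ω * P s₁)
            - ((∑ e, r e * V e * s₂ e) - ω * P s₂)) ∧
    (∀ F : Set (E → ℝ), (∀ s ∈ F, ∀ e, s e = 0 ∨ s e = 1) →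
        ∀ s ∈ F,
          ((∀ s' ∈ F, ∑ e, b e * s' e ≤ ∑ e, b e * s e) ↔
           (∀ s' ∈ F, (∑ e, r e * V e * s' e) - ω * P s'
              ≤ (∑ e, r e * V e * s e) - ω * P s))) := by
  have key : ∀ s : E → ℝ, (∀ e, s e = 0 ∨ s e = 1) →
      ∑ e, b e * s e = (∑ e, r e * V e * s e - ω * P s)
        + ∑ e, (if sprev e = 1 then ω * ce e else 0) := fun s hs => by
    rw [hP]; exact sum_benefit_mul_eq r V ca ce sprev hsprev ω b hb s hs
  refine ⟨fun s₁ s₂ h₁ h₂ => ?_, fun F hF s hs => ?_⟩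
  · rw [key s₁ h₁, key s₂ h₂, add_sub_add_right_eq_sub]
  · exact forall_le_iff_of_eq_add_const _ (fun x hx => key x (hF x hx)) hs
end

section
/- Let N and K be nonempty finite sets with |N| = n. Let C : N × N → ℝ be nonnegative link capacities, A_max : N × K → ℝ nonnegative arrival bounds, and ρ : N → ℝ nonnegative per-object cache rate bounds. Suppose V, V' : N × K → ℝ are nonnegative, μ : N × N × K → ℝ is nonnegative with Σ_{k∈K} μ a b k ≤ C a b for all a, b ∈ N, A : N × K → ℝ satisfies 0 ≤ A n k ≤ A_max n k, R : N × K → ℝ satisfies 0 ≤ R n k ≤ ρ n, and for all n ∈ N, k ∈ K: V' n k ≤ max( max(V n k − Σ_{b∈N} μ n b k, 0) + A n k + Σ_{a∈N} μ a n k − R n k, 0). Define B := (1/(2n)) · Σ_{n∈N} [ (Σ_{b∈N} C n b)² + 2·(Σ_{b∈N} C n b)·|K|·ρ n + (Σ_{k∈K} A_max n k + Σ_{a∈N} C a n + |K|·ρ n)² ]. Then Σ_{n,k} (V' n k)² − Σ_{n,k} (V n k)² ≤ 2·n·B + 2·Σ_{n,k} V n k · A n k − 2·Σ_{a,b∈N,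 k∈K} μ a b k · (V a k − V b k) − 2·Σ_{n,k} V n k · R n k. -/
/-!
Each queue evolves by `V' ≤ ((V - out)⁺ + A + in - R)⁺`. Squaring this and using
`(V - out)⁺ ≤ V` and `((V - out)⁺)² ≤ (V - out)²` bounds `V'² - V²` by terms linear in `V`
plus a quadratic remainder in the service, arrival, and caching rates. Summed over the
network, the linear transmission terms regroup link by link into the differential backlogs
`V a k - V b k`, while the quadratic remainder of each node is controlled by its link
capacities, arrival bounds and cache rate, which is what `B` collects.
-/

open Finset

section OrderedSemiring

variable {ι R : Type*} [CommSemiring R] [PartialOrder R] [IsOrderedRing R]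
  {s : Finset ι} {f g : ι → R}

lemma Finset.sum_sq_le_sq_of_sum_le {c : R} (hf : ∀ i ∈ s, 0 ≤ f i)
    (hc : ∑ i ∈ s, f i ≤ c) : ∑ i ∈ s, f i ^ 2 ≤ c ^ 2 :=
  (sum_sq_le_sq_sum_of_nonneg hf).trans (pow_le_pow_left₀ (sum_nonneg hf) hc 2)

lemma Finset.sum_mul_le_sum_mul_sum_of_nonneg (hf : ∀ i ∈ s, 0 ≤ f i)
    (hg : ∀ i ∈ s, 0 ≤ g i) : ∑ i ∈ s, f i * g i ≤ (∑ i ∈ s, f i) * ∑ i ∈ s, g i := by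
  rw [sum_mul_sum]
  exact sum_le_sum fun i hi =>
    single_le_sum (f := fun j => f i * g j) (fun j hj => mul_nonneg (hf i hi) (hg j hj)) hi

end OrderedSemiring

lemma sq_le_sq_of_le_max_zero {x y : ℝ} (hx : 0 ≤ x) (h : x ≤ max y 0) : x ^ 2 ≤ y ^ 2 := by
  rcases le_total y 0 with hy | hy
  · rw [max_eq_right hy] at h
    rw [le_antisymm h hx]
    simpa using sq_nonneg y
  · rw [max_eq_left hy] at h
    exact pow_le_pow_left₀ hx h 2

lemma queue_sq_sub_sq_le {v v' o i a r : ℝ} (hv : 0 ≤ v) (hv' : 0 ≤ v') (ho : 0 ≤ o)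
    (ha : 0 ≤ a) (hi : 0 ≤ i) (hr : 0 ≤ r)
    (hev : v' ≤ max (max (v - o) 0 + a + i - r) 0) :
    v' ^ 2 - v ^ 2 ≤ (o ^ 2 + (a + i) ^ 2 + r ^ 2 + 2 * o * r)
      + 2 * (v * a) + 2 * (v * i) - 2 * (v * o) - 2 * (v * r) := by
  set w := max (v - o) 0
  have hw0 : 0 ≤ w := le_max_right _ _
  have hw_ge : v - o ≤ w := le_max_left _ _
  have hw_le : w ≤ v := max_le (by linarith) hv
  have hw_sq : w ^ 2 ≤ (v - o) ^ 2 := sq_le_sq_of_le_max_zero hw0 le_rfl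
  have hv'_sq : v' ^ 2 ≤ (w + a + i - r) ^ 2 := sq_le_sq_of_le_max_zero hv' hev
  nlinarith [mul_le_mul_of_nonneg_right hw_le (add_nonneg ha hi),
    mul_le_mul_of_nonneg_right hw_ge hr, mul_nonneg (add_nonneg ha hi) hr]

lemma sum_sum_sum_mul_sub_eq {ι κ R : Type*} [Fintype ι] [Fintype κ] [CommRing R]
    (f : ι → ι → κ → R) (g : ι → κ → R) :
    ∑ a, ∑ b, ∑ k, f a b k * (g a k - g b k)
      = ∑ m, ∑ k, g m k * ∑ b, f m b k - ∑ m, ∑ k, g m k * ∑ a, f a m k := by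
  simp only [mul_sub, sum_sub_distrib, mul_sum]
  congr 1
  · exact sum_congr rfl fun a _ => by rw [sum_comm]; simp only [mul_comm]
  · rw [sum_comm]
    exact sum_congr rfl fun b _ => by rw [sum_comm]; simp only [mul_comm]

lemma sum_node_sq_le {κ : Type*} [Fintype κ] {o i a amax r : κ → ℝ} {co ci ρ : ℝ}
    (ho : ∀ k, 0 ≤ o k) (hi : ∀ k, 0 ≤ i k) (ha : ∀ k, 0 ≤ a k) (hr : ∀ k, 0 ≤ r k)
    (ho_le : ∑ k, o k ≤ co) (hi_le : ∑ k, i k ≤ ci) (ha_le : ∀ k, a k ≤ amax k)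
    (hr_le : ∀ k, r k ≤ ρ) :
    ∑ k, (o k ^ 2 + (a k + i k) ^ 2 + r k ^ 2 + 2 * o k * r k)
      ≤ co ^ 2 + 2 * co * (Fintype.card κ : ℝ) * ρ
        + (∑ k, amax k + ci + (Fintype.card κ : ℝ) * ρ) ^ 2 := by
  have hai : ∀ k, 0 ≤ a k + i k := fun k => add_nonneg (ha k) (hi k)
  have hai_le : ∑ k, (a k + i k) ≤ ∑ k, amax k + ci := by
    rw [sum_add_distrib]
    exact add_le_add (sum_le_sum fun k _ => ha_le k) hi_le
  have hr_sum_le : ∑ k, r k ≤ Fintype.card κ * ρ := by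
    simpa using sum_le_sum fun k (_ : k ∈ univ) => hr_le k
  have h_out : ∑ k, o k ^ 2 ≤ co ^ 2 := sum_sq_le_sq_of_sum_le (fun k _ => ho k) ho_le
  have h_cross : ∑ k, o k * r k ≤ co * (Fintype.card κ * ρ) :=
    (sum_mul_le_sum_mul_sum_of_nonneg (fun k _ => ho k) (fun k _ => hr k)).trans
      (mul_le_mul ho_le hr_sum_le (sum_nonneg fun k _ => hr k)
        ((sum_nonneg fun k _ => ho k).trans ho_le))
  have h_in_cache : ∑ k, (a k + i k) ^ 2 + ∑ k, r k ^ 2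
      ≤ (∑ k, amax k + ci + Fintype.card κ * ρ) ^ 2 := by
    have hx := sum_nonneg fun k (_ : k ∈ univ) => hai k
    have hy := sum_nonneg fun k (_ : k ∈ univ) => hr k
    calc ∑ k, (a k + i k) ^ 2 + ∑ k, r k ^ 2
        ≤ (∑ k, (a k + i k)) ^ 2 + (∑ k, r k) ^ 2 :=
          add_le_add (sum_sq_le_sq_sum_of_nonneg fun k _ => hai k)
            (sum_sq_le_sq_sum_of_nonneg fun k _ => hr k)
      _ ≤ (∑ k, (a k + i k) + ∑ k, r k) ^ 2 := by nlinarith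
      _ ≤ _ := pow_le_pow_left₀ (add_nonneg hx hy) (add_le_add hai_le hr_sum_le) 2
  simp only [sum_add_distrib, mul_assoc, ← mul_sum]
  linarith

theorem network_lyapunov_drift_general {N K : Type*} [Fintype N] [Fintype K]
    [Nonempty N]
    (n : ℕ) (hn : Fintype.card N = n)
    (C : N → N → ℝ)
    (Amax : N → K → ℝ)
    (ρ : N → ℝ)
    (V V' : N → K → ℝ)
    (hV : ∀ m k, 0 ≤ V m k) (hV' : ∀ m k, 0 ≤ V' m k)
    (μ : N → N → K → ℝ) (hμ : ∀ a b k, 0 ≤ μ a b k)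
    (hμC : ∀ a b, ∑ k, μ a b k ≤ C a b)
    (A : N → K → ℝ) (hA0 : ∀ m k, 0 ≤ A m k) (hA1 : ∀ m k, A m k ≤ Amax m k)
    (R : N → K → ℝ) (hR0 : ∀ m k, 0 ≤ R m k) (hR1 : ∀ m k, R m k ≤ ρ m)
    (hevo : ∀ m k, V' m k ≤
      max (max (V m k - ∑ b, μ m b k) 0 + A m k + (∑ a, μ a m k) - R m k) 0)
    (B : ℝ)
    (hB : B = (1 / (2 * (n : ℝ))) * ∑ m : N,
      ((∑ b, C m b) ^ 2
        + 2 * (∑ b, C m b) * (Fintype.card K : ℝ) * ρ m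
        + (∑ k, Amax m k + (∑ a, C a m) + (Fintype.card K : ℝ) * ρ m) ^ 2)) :
    (∑ m : N, ∑ k : K, (V' m k) ^ 2) - (∑ m : N, ∑ k : K, (V m k) ^ 2)
      ≤ 2 * (n : ℝ) * B
        + 2 * ∑ m : N, ∑ k : K, V m k * A m k
        - 2 * ∑ a : N, ∑ b : N, ∑ k : K, μ a b k * (V a k - V b k)
        - 2 * ∑ m : N, ∑ k : K, V m k * R m k := by
  have h2n : 2 * (n : ℝ) ≠ 0 := by
    rw [← hn]
    positivity
  have h_out_nonneg m k : 0 ≤ ∑ b, μ m b k := sum_nonneg fun b _ => hμ m b k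
  have h_in_nonneg m k : 0 ≤ ∑ a, μ a m k := sum_nonneg fun a _ => hμ a m k
  have h_queue := sum_le_sum fun m (_ : m ∈ univ) => sum_le_sum fun k (_ : k ∈ univ) =>
    queue_sq_sub_sq_le (hV m k) (hV' m k) (h_out_nonneg m k) (hA0 m k) (h_in_nonneg m k)
      (hR0 m k) (hevo m k)
  have h_node := sum_le_sum fun m (_ : m ∈ univ) =>
    sum_node_sq_le (h_out_nonneg m) (h_in_nonneg m) (hA0 m) (hR0 m)
      (co := ∑ b, C m b) (ci := ∑ a, C a m) (amax := Amax m) (ρ := ρ m)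
      (by rw [sum_comm]; exact sum_le_sum fun b _ => hμC m b)
      (by rw [sum_comm]; exact sum_le_sum fun a _ => hμC a m) (hA1 m) (hR1 m)
  rw [sum_sum_sum_mul_sub_eq, hB, ← mul_assoc, mul_one_div_cancel h2n, one_mul]
  simp only [sum_sub_distrib, sum_add_distrib, ← mul_sum] at h_queue h_node ⊢
  linarith

/-- Deterministic network-wide Lyapunov drift inequality for the VIP queue
network. -/
theorem network_lyapunov_drift {N K : Type*} [Fintype N] [Fintype K]
    [Nonempty N] [Nonempty K]
    (n : ℕ) (hn : Fintype.card N = n)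
    (C : N → N → ℝ) (hC : ∀ a b, 0 ≤ C a b)
    (Amax : N → K → ℝ) (hAmax : ∀ m k, 0 ≤ Amax m k)
    (ρ : N → ℝ) (hρ : ∀ m, 0 ≤ ρ m)
    (V V' : N → K → ℝ)
    (hV : ∀ m k, 0 ≤ V m k) (hV' : ∀ m k, 0 ≤ V' m k)
    (μ : N → N → K → ℝ) (hμ : ∀ a b k, 0 ≤ μ a b k)
    (hμC : ∀ a b, ∑ k, μ a b k ≤ C a b)
    (A : N → K → ℝ) (hA0 : ∀ m k, 0 ≤ A m k) (hA1 : ∀ m k, A m k ≤ Amax m k)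
    (R : N → K → ℝ) (hR0 : ∀ m k, 0 ≤ R m k) (hR1 : ∀ m k, R m k ≤ ρ m)
    (hevo : ∀ m k, V' m k ≤
      max (max (V m k - ∑ b, μ m b k) 0 + A m k + (∑ a, μ a m k) - R m k) 0)
    (B : ℝ)
    (hB : B = (1 / (2 * (n : ℝ))) * ∑ m : N,
      ((∑ b, C m b) ^ 2
        + 2 * (∑ b, C m b) * (Fintype.card K : ℝ) * ρ m
        + (∑ k, Amax m k + (∑ a, C a m) + (Fintype.card K : ℝ) * ρ m) ^ 2)) :
    (∑ m : N, ∑ k : K, (V' m k) ^ 2) - (∑ m : N, ∑ k : K, (V m k) ^ 2)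
      ≤ 2 * (n : ℝ) * B
        + 2 * ∑ m : N, ∑ k : K, V m k * A m k
        - 2 * ∑ a : N, ∑ b : N, ∑ k : K, μ a b k * (V a k - V b k)
        - 2 * ∑ m : N, ∑ k : K, V m k * R m k :=
  network_lyapunov_drift_general n hn C Amax ρ V V' hV hV' μ hμ hμC A hA0 hA1 R hR0 hR1 hevo B hB
end

section
/- Let L, p, Q : ℕ → ℝ be nonnegative sequences, and let D ≥ 0, Ψ ∈ ℝ, ε > 0, ω > 0. Suppose that for every t ≥ 1: L (t+1) − L t + ω · p t ≤ D − 2·ε·Q t + ω·Ψ. Then limsup_{T→∞} (1/T) · Σ_{t=1}^{T} p t ≤ D/ω + Ψ. -/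
/-!
Summing the per-slot drift-plus-penalty inequality telescopes the Lyapunov drift, so after
dropping the nonnegative terms `L (T + 1)` and `2 ε Q t` one gets
`ω ∑_{t=1}^T p t ≤ T (D + ω Ψ) + L 1`. Hence the time average of the penalty is at most
`D / ω + Ψ + L 1 / (ω T)`, and the error term vanishes as `T → ∞`.
-/

open Filter Finset Topology

lemma sub_add_sum_Icc_le_of_drift_le {V b : ℕ → ℝ} {c : ℝ}
    (h : ∀ t, 1 ≤ t → V (t + 1) - V t + b t ≤ c) (T : ℕ) :
    V (T + 1) - V 1 + ∑ t ∈ Icc 1 T, b t ≤ T * c := by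
  induction T with
  | zero => simp
  | succ n ih =>
    rw [sum_Icc_succ_top (by omega), Nat.cast_succ]
    linarith [h (n + 1) (by omega)]

lemma avg_le_of_drift_plus_penalty_le {V b : ℕ → ℝ} {c ω : ℝ} (hV : ∀ t, 0 ≤ V t) (hω : 0 < ω)
    (h : ∀ t, 1 ≤ t → V (t + 1) - V t + ω * b t ≤ c) {T : ℕ} (hT : 1 ≤ T) :
    (1 / (T : ℝ)) * ∑ t ∈ Icc 1 T, b t ≤ c / ω + V 1 / ω / T := by
  have hT₀ : (0 : ℝ) < T := by exact_mod_cast hT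
  have hsum : ω * ∑ t ∈ Icc 1 T, b t ≤ T * c + V 1 := by
    rw [mul_sum]
    linarith [sub_add_sum_Icc_le_of_drift_le h T, hV (T + 1)]
  have hrhs : (c / ω + V 1 / ω / T) * T = (T * c + V 1) / ω := by field_simp
  rw [one_div_mul_eq_div, div_le_iff₀ hT₀, hrhs, le_div_iff₀ hω]
  linarith

lemma limsup_le_of_eventually_le_add_div_natCast {u : ℕ → ℝ} {c K : ℝ}
    (hu : IsCoboundedUnder (· ≤ ·) atTop u) (h : ∀ᶠ T in atTop, u T ≤ c + K / T) :
    limsup u atTop ≤ c := by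
  have hlim : Tendsto (fun T : ℕ => c + K / T) atTop (𝓝 c) := by
    simpa using tendsto_const_nhds.add (tendsto_const_div_atTop_nhds_zero_nat K)
  exact (limsup_le_limsup h hu hlim.isBoundedUnder_le).trans hlim.limsup_eq.le

theorem dpp_penalty_bound_general (L p Q : ℕ → ℝ)
    (hL : ∀ t, 0 ≤ L t) (hp : ∀ t, 0 ≤ p t) (hQ : ∀ t, 0 ≤ Q t)
    (D : ℝ) (Ψ : ℝ) (ε : ℝ) (hε : 0 < ε) (ω : ℝ) (hω : 0 < ω)
    (hrec : ∀ t, 1 ≤ t →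
      L (t + 1) - L t + ω * p t ≤ D - 2 * ε * Q t + ω * Ψ) :
    Filter.limsup
      (fun T : ℕ => (1 / (T : ℝ)) * ∑ t ∈ Finset.Icc 1 T, p t)
      Filter.atTop ≤ D / ω + Ψ := by
  have hdrift : ∀ t, 1 ≤ t → L (t + 1) - L t + ω * p t ≤ D + ω * Ψ := fun t ht => by
    linarith [hrec t ht, mul_nonneg (mul_nonneg zero_le_two hε.le) (hQ t)]
  have hc : (D + ω * Ψ) / ω = D / ω + Ψ := by field_simp
  have havg_nonneg : ∀ T : ℕ, 0 ≤ (1 / (T : ℝ)) * ∑ t ∈ Icc 1 T, p t := fun T =>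
    mul_nonneg (by positivity) (sum_nonneg fun t _ => hp t)
  refine limsup_le_of_eventually_le_add_div_natCast (K := L 1 / ω)
    (IsCoboundedUnder.of_frequently_ge (Frequently.of_forall havg_nonneg)) ?_
  filter_upwards [eventually_ge_atTop 1] with T hT
  rw [← hc]
  exact avg_le_of_drift_plus_penalty_le hL hω hdrift hT

/-- Long-term average penalty bound of the drift-plus-penalty theorem. -/
theorem dpp_penalty_bound (L p Q : ℕ → ℝ)
    (hL : ∀ t, 0 ≤ L t) (hp : ∀ t, 0 ≤ p t) (hQ : ∀ t, 0 ≤ Q t)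
    (D : ℝ) (hD : 0 ≤ D) (Ψ : ℝ) (ε : ℝ) (hε : 0 < ε) (ω : ℝ) (hω : 0 < ω)
    (hrec : ∀ t, 1 ≤ t →
      L (t + 1) - L t + ω * p t ≤ D - 2 * ε * Q t + ω * Ψ) :
    Filter.limsup
      (fun T : ℕ => (1 / (T : ℝ)) * ∑ t ∈ Finset.Icc 1 T, p t)
      Filter.atTop ≤ D / ω + Ψ :=
  dpp_penalty_bound_general L p Q hL hp hQ D Ψ ε hε ω hω hrec
end

section
/- Let L, p, Q : ℕ → ℝ be nonnegative sequences, and let D ≥ 0, Ψ ≥ 0, ε > 0, ω ≥ 0. Suppose that for every t ≥ 1: L (t+1) − L t + ω · p t ≤ D − 2·ε·Q t + ω·Ψ. Then limsup_{T→∞} (1/T) · Σ_{t=1}^{T} Q t ≤ D/(2·ε) + ω·Ψ/(2·ε). -/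
/-!
Summing the drift-plus-penalty inequality over `t = 1, …, T` telescopes the drift to
`L (T + 1) - L 1 ≥ -L 1`; dropping the nonnegative penalty leaves
`2 ε ∑ Q t ≤ T (D + ω Ψ) + L 1`. Dividing by `2 ε T`, the time average of `Q` is at most
`(D + ω Ψ) / (2 ε) + L 1 / (2 ε T)`, and the last term vanishes as `T → ∞`.
-/

open Filter Finset

theorem mul_sum_Icc_le_of_drift_le {L r Q : ℕ → ℝ} {B c : ℝ}
    (hL : ∀ t, 0 ≤ L t) (hr : ∀ t, 0 ≤ r t)
    (hdrift : ∀ t, 1 ≤ t → L (t + 1) - L t + r t ≤ B - c * Q t)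
    {T : ℕ} (hT : 1 ≤ T) :
    c * ∑ t ∈ Icc 1 T, Q t ≤ T * B + L 1 := by
  have hsum : ∑ t ∈ Icc 1 T, (L (t + 1) - L t + r t) ≤ ∑ t ∈ Icc 1 T, (B - c * Q t) :=
    sum_le_sum fun t ht => hdrift t (mem_Icc.mp ht).1
  rw [sum_add_distrib, sum_Icc_sub hT, sum_sub_distrib, sum_const, Nat.card_Icc,
    ← mul_sum, nsmul_eq_mul, Nat.add_sub_cancel] at hsum
  linarith [hL (T + 1), sum_nonneg fun t (_ : t ∈ Icc 1 T) => hr t]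

theorem limsup_le_of_le_add_div_nat {f : ℕ → ℝ} {a K : ℝ}
    (hf : IsCoboundedUnder (· ≤ ·) atTop f) (hle : ∀ᶠ T in atTop, f T ≤ a + K / T) :
    limsup f atTop ≤ a := by
  have hlim : Tendsto (fun T : ℕ => a + K / T) atTop (nhds a) := by
    simpa using tendsto_const_nhds.add (tendsto_const_div_atTop_nhds_zero_nat K)
  calc limsup f atTop ≤ limsup (fun T : ℕ => a + K / T) atTop :=
        limsup_le_limsup hle hf hlim.isBoundedUnder_le
    _ = a := hlim.limsup_eq

theorem limsup_avg_le_of_mul_sum_le {Q : ℕ → ℝ} {B c K : ℝ} (hQ : ∀ t, 0 ≤ Q t) (hc : 0 < c)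
    (hsum : ∀ T, 1 ≤ T → c * ∑ t ∈ Icc 1 T, Q t ≤ T * B + K) :
    limsup (fun T : ℕ => (1 / (T : ℝ)) * ∑ t ∈ Icc 1 T, Q t) atTop ≤ B / c := by
  apply limsup_le_of_le_add_div_nat (K := K / c)
  · exact IsCoboundedUnder.of_frequently_ge <| Frequently.of_forall fun T =>
      mul_nonneg (by positivity) (sum_nonneg fun t _ => hQ t)
  · filter_upwards [eventually_ge_atTop 1] with T hT
    have hTpos : (0 : ℝ) < T := by exact_mod_cast hT
    have hbound : (B / c + K / c / T) * T = (T * B + K) / c := by field_simp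
    rw [one_div_mul_eq_div, div_le_iff₀ hTpos, hbound, le_div_iff₀ hc]
    linarith [hsum T hT]

theorem dpp_backlog_bound_general (L p Q : ℕ → ℝ)
    (hL : ∀ t, 0 ≤ L t) (hp : ∀ t, 0 ≤ p t) (hQ : ∀ t, 0 ≤ Q t)
    (D : ℝ) (Ψ : ℝ)
    (ε : ℝ) (hε : 0 < ε) (ω : ℝ) (hω : 0 ≤ ω)
    (hrec : ∀ t, 1 ≤ t →
      L (t + 1) - L t + ω * p t ≤ D - 2 * ε * Q t + ω * Ψ) :
    Filter.limsup
      (fun T : ℕ => (1 / (T : ℝ)) * ∑ t ∈ Finset.Icc 1 T, Q t)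
      Filter.atTop ≤ D / (2 * ε) + ω * Ψ / (2 * ε) := by
  have hdrift : ∀ t, 1 ≤ t → L (t + 1) - L t + ω * p t ≤ (D + ω * Ψ) - 2 * ε * Q t :=
    fun t ht => by linarith [hrec t ht]
  rw [← add_div]
  exact limsup_avg_le_of_mul_sum_le hQ (by positivity) fun T hT =>
    mul_sum_Icc_le_of_drift_le hL (fun t => mul_nonneg hω (hp t)) hdrift hT

/-- Long-term average backlog bound of the drift-plus-penalty theorem. -/
theorem dpp_backlog_bound (L p Q : ℕ → ℝ)
    (hL : ∀ t, 0 ≤ L t) (hp : ∀ t, 0 ≤ p t) (hQ : ∀ t, 0 ≤ Q t)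
    (D : ℝ) (hD : 0 ≤ D) (Ψ : ℝ) (hΨ : 0 ≤ Ψ)
    (ε : ℝ) (hε : 0 < ε) (ω : ℝ) (hω : 0 ≤ ω)
    (hrec : ∀ t, 1 ≤ t →
      L (t + 1) - L t + ω * p t ≤ D - 2 * ε * Q t + ω * Ψ) :
    Filter.limsup
      (fun T : ℕ => (1 / (T : ℝ)) * ∑ t ∈ Finset.Icc 1 T, Q t)
      Filter.atTop ≤ D / (2 * ε) + ω * Ψ / (2 * ε) :=
  dpp_backlog_bound_general L p Q hL hp hQ D Ψ ε hε ω hω hrec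
end
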